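/- arXiv:2408.00236 — 9 statements merged into one kernel-verified Lean document; each statement's English description precedes it below -/
import Mathlib

section
/- Let ι be a countable index set and let p, q : ι → ℝ be nonnegative with ∑'_α p α = 1 and ∑'_α q α = 1. Assume that q α = 0 implies p α = 0 for every α (absolute continuity), and that the functions α ↦ p α · log (q α) and α ↦ p α · log (p α) are summable. Then ∑'_α p α · log (q α) ≤ ∑'_α p α · log (p α); equivalently, the cross entropy of p relative to q is bounded above by the entropy sum of p. -/
/-- Gibbs inequality (discrete form): for probability mass functions `p` and `q` on a
countable index set with `p` absolutely continuous with respect to `q`, the cross entropy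
sum `∑' α, p α * log (q α)` is bounded above by the entropy sum `∑' α, p α * log (p α)`. -/
theorem gibbs_inequality_cross_entropy_le_entropy
    {ι : Type*} [Countable ι] (p q : ι → ℝ)
    (hp : ∀ a, 0 ≤ p a) (hq : ∀ a, 0 ≤ q a)
    (hps : ∑' a, p a = 1) (hqs : ∑' a, q a = 1)
    (hac : ∀ a, q a = 0 → p a = 0)
    (hpq : Summable fun a => p a * Real.log (q a))
    (hpp : Summable fun a => p a * Real.log (p a)) :
    ∑' a, p a * Real.log (q a) ≤ ∑' a, p a * Real.log (p a) := by
  have hsp : Summable p := by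
    by_contra h
    rw [tsum_eq_zero_of_not_summable h] at hps
    norm_num at hps
  have hsq : Summable q := by
    by_contra h
    rw [tsum_eq_zero_of_not_summable h] at hqs
    norm_num at hqs
  have key : ∀ a, p a * Real.log (q a) - p a * Real.log (p a) ≤ q a - p a := by
    intro a
    rcases eq_or_lt_of_le (hp a) with h0 | h0
    · simp [← h0, hq a]
    · have hq0 : 0 < q a := by
        rcases eq_or_lt_of_le (hq a) with h | h
        · exact absurd (hac a h.symm) (ne_of_gt h0)
        · exact h
      have hlog : Real.log (q a) - Real.log (p a) ≤ q a / p a - 1 := by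
        rw [← Real.log_div (ne_of_gt hq0) (ne_of_gt h0)]
        exact Real.log_le_sub_one_of_pos (div_pos hq0 h0)
      calc p a * Real.log (q a) - p a * Real.log (p a)
          = p a * (Real.log (q a) - Real.log (p a)) := by ring
        _ ≤ p a * (q a / p a - 1) := by
            exact mul_le_mul_of_nonneg_left hlog (hp a)
        _ = q a - p a := by field_simp
  have hsum1 : Summable fun a => p a * Real.log (q a) - p a * Real.log (p a) := hpq.sub hpp
  have hsum2 : Summable fun a => q a - p a := hsq.sub hsp
  have := Summable.tsum_le_tsum key hsum1 hsum2
  rw [Summable.tsum_sub hpq hpp, Summable.tsum_sub hsq hsp, hps, hqs] at this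
  linarith
end

section
/- Let Ω be a finite nonempty set, β > 0, and H₁, H₂ : Ω → ℝ. Define Z_H = ∑_{y∈Ω} exp(−β·H y), the Gibbs measure μ_H(x) = exp(−β·H x)/Z_H, and the Helmholtz free energy F_H = −β⁻¹·log Z_H. Then F_{H₂} ≤ F_{H₁} + ∑_{x∈Ω} μ_{H₁}(x)·(H₂ x − H₁ x). -/
open Finset Real

/-- Gibbs–Bogoliubov inequality in the classical canonical ensemble on a finite state space:
with `Z_H = ∑ y, exp (−β * H y)`, Gibbs measure `μ_H x = exp (−β * H x) / Z_H` and free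
energy `F_H = −β⁻¹ * log Z_H`, we have `F_{H₂} ≤ F_{H₁} + ⟨H₂ − H₁⟩_{H₁}`. -/
theorem gibbs_bogoliubov_inequality
    {Ω : Type*} [Fintype Ω] [Nonempty Ω] (β : ℝ) (hβ : 0 < β) (H₁ H₂ : Ω → ℝ) :
    -β⁻¹ * Real.log (∑ y : Ω, Real.exp (-β * H₂ y)) ≤
      -β⁻¹ * Real.log (∑ y : Ω, Real.exp (-β * H₁ y)) +
        ∑ x : Ω, (Real.exp (-β * H₁ x) / ∑ y : Ω, Real.exp (-β * H₁ y)) * (H₂ x - H₁ x) := by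
  set Z₁ : ℝ := ∑ y : Ω, Real.exp (-β * H₁ y) with hZ₁
  have hZ₁pos : 0 < Z₁ := Finset.sum_pos (fun y _ => Real.exp_pos _) Finset.univ_nonempty
  set m : ℝ := ∑ x : Ω, (Real.exp (-β * H₁ x) / Z₁) * (H₂ x - H₁ x) with hm
  have hmean : ∑ x : Ω, Real.exp (-β * H₁ x) * (H₂ x - H₁ x) = Z₁ * m := by
    rw [hm, Finset.mul_sum]
    refine Finset.sum_congr rfl fun x _ => ?_
    field_simp
  have key : Z₁ * Real.exp (-β * m) ≤ ∑ y : Ω, Real.exp (-β * H₂ y) := by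
    have h1 : ∀ y : Ω, Real.exp (-β * H₁ y) * Real.exp (-β * m) *
        (1 + (-β * (H₂ y - H₁ y) + β * m)) ≤ Real.exp (-β * H₂ y) := by
      intro y
      have ha := Real.add_one_le_exp (-β * (H₂ y - H₁ y) + β * m)
      have h2 : Real.exp (-β * H₁ y) * Real.exp (-β * m) *
          Real.exp (-β * (H₂ y - H₁ y) + β * m) = Real.exp (-β * H₂ y) := by
        rw [← Real.exp_add, ← Real.exp_add]; ring_nf
      calc Real.exp (-β * H₁ y) * Real.exp (-β * m) * (1 + (-β * (H₂ y - H₁ y) + β * m))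
          ≤ Real.exp (-β * H₁ y) * Real.exp (-β * m) *
            Real.exp (-β * (H₂ y - H₁ y) + β * m) := by
            apply mul_le_mul_of_nonneg_left (by linarith) (by positivity)
        _ = Real.exp (-β * H₂ y) := h2
    have hs : ∑ y : Ω, Real.exp (-β * H₁ y) * Real.exp (-β * m) *
        (1 + (-β * (H₂ y - H₁ y) + β * m)) = Z₁ * Real.exp (-β * m) := by
      have hterm : ∀ y : Ω, Real.exp (-β * H₁ y) * Real.exp (-β * m) *
          (1 + (-β * (H₂ y - H₁ y) + β * m)) =
          Real.exp (-β * m) * Real.exp (-β * H₁ y) +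
          (-β * Real.exp (-β * m)) * (Real.exp (-β * H₁ y) * (H₂ y - H₁ y)) +
          (β * m * Real.exp (-β * m)) * Real.exp (-β * H₁ y) := fun y => by ring
      rw [Finset.sum_congr rfl (fun y _ => hterm y), Finset.sum_add_distrib,
        Finset.sum_add_distrib, ← Finset.mul_sum, ← Finset.mul_sum, ← Finset.mul_sum,
        hmean, ← hZ₁]
      ring
    calc Z₁ * Real.exp (-β * m) = _ := hs.symm
      _ ≤ ∑ y : Ω, Real.exp (-β * H₂ y) := Finset.sum_le_sum fun y _ => h1 y
  have hZ₂pos : 0 < ∑ y : Ω, Real.exp (-β * H₂ y) :=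
    Finset.sum_pos (fun y _ => Real.exp_pos _) Finset.univ_nonempty
  have hlog : Real.log Z₁ + (-β * m) ≤ Real.log (∑ y : Ω, Real.exp (-β * H₂ y)) := by
    have := Real.log_le_log (by positivity) key
    rwa [Real.log_mul (ne_of_gt hZ₁pos) (Real.exp_ne_zero _), Real.log_exp] at this
  have hβinv : 0 < β⁻¹ := by positivity
  have h3 := mul_le_mul_of_nonneg_left hlog hβinv.le
  have hb : β⁻¹ * β = 1 := inv_mul_cancel₀ hβ.ne'
  have h4 : β⁻¹ * (Real.log Z₁ + -β * m) = β⁻¹ * Real.log Z₁ - β⁻¹ * β * m := by ring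
  rw [h4, hb, one_mul] at h3
  linarith
end

section
/- Let n ≥ 1, let H₁, H₂ be Hermitian n×n complex matrices, and let β > 0. Define Z_i = trace(exp(−β·H_i)) (a positive real number), the density matrix ρ₁ = exp(−β·H₁)/Z₁, and the free energies F_i = −β⁻¹·log(Re Z_i). Then F₂ ≤ F₁ + Re(trace(ρ₁·(H₂ − H₁))). -/
/-! `A ↦ log tr exp A` is convex on Hermitian matrices, with gradient the Gibbs state
`exp A / tr exp A`; the theorem is its tangent-line inequality at `A = -β H₁` in the direction
`B = -β H₂`, rescaled by `-β⁻¹`. All terms are invariant under unitary conjugation, so `A` may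
be taken diagonal, with entries `a`. Jensen's inequality for `exp` in the eigenbasis of `B`
gives Peierls' bound `∑ exp (B i i) ≤ tr exp B`, which reduces the claim to the commutative
Gibbs inequality `log ∑ exp a + ⟨softmax a, b - a⟩ ≤ log ∑ exp b`, once more Jensen for `exp`. -/

open Matrix

namespace Real

theorem log_sum_exp_add_le_log_sum_exp {ι : Type*} [Fintype ι] [Nonempty ι] (a b : ι → ℝ) :
    log (∑ i, exp (a i)) + (∑ i, exp (a i))⁻¹ * ∑ i, exp (a i) * (b i - a i)
      ≤ log (∑ i, exp (b i)) := by
  set Z := ∑ i, exp (a i)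
  have hZ : 0 < Z := Finset.sum_pos (fun i _ => exp_pos _) Finset.univ_nonempty
  have hS : 0 < ∑ i, exp (b i) := Finset.sum_pos (fun i _ => exp_pos _) Finset.univ_nonempty
  have jensen := convexOn_exp.map_sum_le (t := Finset.univ) (w := fun i => exp (a i) / Z)
    (p := fun i => b i - a i) (fun i _ => by positivity)
    (by rw [← Finset.sum_div, div_self hZ.ne']) (fun i _ => Set.mem_univ _)
  have mean_eq : ∑ i, exp (a i) / Z * (b i - a i) = Z⁻¹ * ∑ i, exp (a i) * (b i - a i) := by
    rw [Finset.mul_sum]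
    congr! 1 with i
    ring
  have sum_eq : ∑ i, exp (a i) / Z * exp (b i - a i) = Z⁻¹ * ∑ i, exp (b i) := by
    rw [Finset.mul_sum]
    congr! 1 with i
    rw [exp_sub]
    field_simp
  simp only [smul_eq_mul, mean_eq, sum_eq] at jensen
  have := (le_log_iff_exp_le (by positivity)).2 jensen
  rw [log_mul (inv_ne_zero hZ.ne') hS.ne', log_inv] at this
  linarith

end Real

namespace Matrix

variable {𝕜 n : Type*} [RCLike 𝕜] [Fintype n] [DecidableEq n]

open Unitary

theorem exp_conjStarAlgAut (U : unitary (Matrix n n 𝕜)) (X : Matrix n n 𝕜) :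
    NormedSpace.exp (conjStarAlgAut 𝕜 _ U X) = conjStarAlgAut 𝕜 _ U (NormedSpace.exp X) := by
  simpa using exp_units_conj (Unitary.toUnits U) X

theorem trace_conjStarAlgAut (U : unitary (Matrix n n 𝕜)) (X : Matrix n n 𝕜) :
    trace (conjStarAlgAut 𝕜 _ U X) = trace X := by
  rw [conjStarAlgAut_apply, trace_mul_cycle, Unitary.coe_star_mul_self, one_mul]

theorem exp_diagonal_ofReal (a : n → ℝ) :
    NormedSpace.exp (diagonal (RCLike.ofReal ∘ a : n → 𝕜)) =
      diagonal (RCLike.ofReal ∘ Real.exp ∘ a) := by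
  rw [exp_diagonal]
  congr 1
  rw [Pi.exp_def]
  funext i
  simpa [Real.exp_eq_exp_ℝ] using
    (NormedSpace.map_exp (algebraMap ℝ 𝕜) RCLike.continuous_ofReal (a i)).symm

theorem mul_diagonal_mul_star_apply_self (U : Matrix n n 𝕜) (g : n → ℝ) (i : n) :
    (U * diagonal (RCLike.ofReal ∘ g : n → 𝕜) * star U) i i =
      ((∑ j, ‖U i j‖ ^ 2 * g j : ℝ) : 𝕜) := by
  rw [mul_apply]
  push_cast
  refine Finset.sum_congr rfl fun j _ => ?_
  rw [mul_diagonal, star_apply, RCLike.star_def, Function.comp_apply, mul_right_comm,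
    RCLike.mul_conj, mul_comm]

theorem sum_norm_sq_apply_eq_one_of_mem_unitaryGroup {U : Matrix n n 𝕜}
    (hU : U ∈ unitaryGroup n 𝕜) (i : n) : ∑ j, ‖U i j‖ ^ 2 = 1 := by
  have h := mul_diagonal_mul_star_apply_self U (fun _ => 1) i
  simp only [Function.comp_def, RCLike.ofReal_one, diagonal_one, mul_one,
    Unitary.mul_star_self_of_mem hU, one_apply_eq] at h
  exact_mod_cast h.symm

theorem IsHermitian.exp_eq_cfc {A : Matrix n n 𝕜} (hA : A.IsHermitian) :
    NormedSpace.exp A = cfc Real.exp A := by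
  rw [hA.cfc_eq, IsHermitian.cfc]
  conv_lhs => rw [hA.spectral_theorem]
  rw [exp_conjStarAlgAut, exp_diagonal_ofReal]

theorem IsHermitian.map_re_apply_self_le_re_cfc_apply_self {A : Matrix n n 𝕜}
    (hA : A.IsHermitian) {f : ℝ → ℝ} (hf : ConvexOn ℝ Set.univ f) (i : n) :
    f (RCLike.re (A i i)) ≤ RCLike.re (cfc f A i i) := by
  rw [hA.cfc_eq, IsHermitian.cfc]
  conv_lhs => rw [hA.spectral_theorem]
  simp only [conjStarAlgAut_apply, mul_diagonal_mul_star_apply_self, RCLike.ofReal_re]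
  simpa using hf.map_sum_le (fun j _ => sq_nonneg _)
    (sum_norm_sq_apply_eq_one_of_mem_unitaryGroup hA.eigenvectorUnitary.2 i)
    (fun j _ => Set.mem_univ (hA.eigenvalues j))

theorem IsHermitian.sum_exp_re_apply_self_le_re_trace_exp {A : Matrix n n 𝕜}
    (hA : A.IsHermitian) :
    ∑ i, Real.exp (RCLike.re (A i i)) ≤ RCLike.re (trace (NormedSpace.exp A)) := by
  rw [hA.exp_eq_cfc, trace, map_sum]
  exact Finset.sum_le_sum fun i _ => hA.map_re_apply_self_le_re_cfc_apply_self convexOn_exp i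

section

variable [Nonempty n]

theorem IsHermitian.log_re_trace_exp_diagonal_add_le (a : n → ℝ) {B : Matrix n n 𝕜}
    (hB : B.IsHermitian) :
    let D : Matrix n n 𝕜 := diagonal (RCLike.ofReal ∘ a)
    Real.log (RCLike.re (trace (NormedSpace.exp D))) +
        RCLike.re (trace ((trace (NormedSpace.exp D))⁻¹ • NormedSpace.exp D * (B - D)))
      ≤ Real.log (RCLike.re (trace (NormedSpace.exp B))) := by
  intro D
  have htrace : trace (NormedSpace.exp D) = ((∑ i, Real.exp (a i) : ℝ) : 𝕜) := by
    simp [D, exp_diagonal_ofReal, trace_diagonal]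
  have hmean : ∀ r : ℝ, RCLike.re (trace ((r : 𝕜)⁻¹ • NormedSpace.exp D * (B - D))) =
      r⁻¹ * ∑ i, Real.exp (a i) * (RCLike.re (B i i) - a i) := by
    intro r
    rw [smul_mul, trace_smul, smul_eq_mul, ← RCLike.ofReal_inv, RCLike.re_ofReal_mul]
    simp [D, exp_diagonal_ofReal, trace, diagonal_mul]
  rw [htrace, RCLike.ofReal_re, hmean]
  exact (Real.log_sum_exp_add_le_log_sum_exp a _).trans <| Real.log_le_log
    (Finset.sum_pos (fun i _ => Real.exp_pos _) Finset.univ_nonempty)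
    hB.sum_exp_re_apply_self_le_re_trace_exp

theorem IsHermitian.log_re_trace_exp_add_le {A B : Matrix n n 𝕜} (hA : A.IsHermitian)
    (hB : B.IsHermitian) :
    Real.log (RCLike.re (trace (NormedSpace.exp A))) +
        RCLike.re (trace ((trace (NormedSpace.exp A))⁻¹ • NormedSpace.exp A * (B - A)))
      ≤ Real.log (RCLike.re (trace (NormedSpace.exp B))) := by
  let c := conjStarAlgAut 𝕜 (Matrix n n 𝕜) hA.eigenvectorUnitary
  obtain ⟨B', rfl⟩ : ∃ B', c B' = B := ⟨c.symm B, c.apply_symm_apply B⟩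
  have hB' : IsSelfAdjoint B' := by simpa using hB.isSelfAdjoint.map c.symm
  rw [hA.spectral_theorem]
  simpa only [c, exp_conjStarAlgAut, trace_conjStarAlgAut, ← map_sub, ← map_smul, ← map_mul]
    using hB'.isHermitian.log_re_trace_exp_diagonal_add_le hA.eigenvalues

end

end Matrix

/-- Quantum Gibbs–Bogoliubov (Peierls–Bogoliubov) inequality for Hermitian matrices:
with `Z_i = trace (exp (−β • H_i))`, `ρ₁ = Z₁⁻¹ • exp (−β • H₁)` and
`F_i = −β⁻¹ * log (Re Z_i)`, one has `F₂ ≤ F₁ + Re (trace (ρ₁ * (H₂ − H₁)))`. -/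
theorem quantum_gibbs_bogoliubov
    {n : ℕ} (hn : 1 ≤ n) (H₁ H₂ : Matrix (Fin n) (Fin n) ℂ)
    (h₁ : H₁.IsHermitian) (h₂ : H₂.IsHermitian) (β : ℝ) (hβ : 0 < β) :
    let Z₁ : ℂ := (NormedSpace.exp ((-(β : ℂ)) • H₁)).trace;
    let Z₂ : ℂ := (NormedSpace.exp ((-(β : ℂ)) • H₂)).trace;
    let ρ₁ : Matrix (Fin n) (Fin n) ℂ := Z₁⁻¹ • NormedSpace.exp ((-(β : ℂ)) • H₁);
    -β⁻¹ * Real.log Z₂.re ≤ -β⁻¹ * Real.log Z₁.re + ((ρ₁ * (H₂ - H₁)).trace).re := by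
  intro Z₁ Z₂ ρ₁
  have : Nonempty (Fin n) := Fin.pos_iff_nonempty.mp hn
  have hβH {H : Matrix (Fin n) (Fin n) ℂ} (h : H.IsHermitian) : ((-(β : ℂ)) • H).IsHermitian :=
    (show IsSelfAdjoint (β : ℂ) from Complex.conj_ofReal β).neg.smul h
  have gibbs := (hβH h₁).log_re_trace_exp_add_le (hβH h₂)
  have hmean : ((ρ₁ * ((-(β : ℂ)) • H₂ - (-(β : ℂ)) • H₁)).trace).re =
      -β * ((ρ₁ * (H₂ - H₁)).trace).re := by
    rw [← smul_sub, Matrix.mul_smul, trace_smul, smul_eq_mul, ← Complex.ofReal_neg,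
      Complex.re_ofReal_mul]
  change Real.log Z₁.re + ((ρ₁ * ((-(β : ℂ)) • H₂ - (-(β : ℂ)) • H₁)).trace).re
    ≤ Real.log Z₂.re at gibbs
  rw [hmean] at gibbs
  linear_combination β⁻¹ * gibbs + ((ρ₁ * (H₂ - H₁)).trace).re * mul_inv_cancel₀ hβ.ne'
end

section
/- Let Ω be a finite nonempty set, β > 0, and H₁, H₂ : Ω → ℝ. With Z_H = ∑_{y∈Ω} exp(−β·H y), μ_H(x) = exp(−β·H x)/Z_H, and F_H = −β⁻¹·log Z_H, if the function H₂ − H₁ is not constant on Ω, then the Gibbs–Bogoliubov inequality is strict: F_{H₂} < F_{H₁} + ∑_{x∈Ω} μ_{H₁}(x)·(H₂ x − H₁ x). -/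
/-- Strict Gibbs–Bogoliubov inequality: if `H₂ − H₁` is not constant on the (finite, nonempty)
state space, then `F_{H₂} < F_{H₁} + ⟨H₂ − H₁⟩_{H₁}`, where `Z_H = ∑ y, exp (−β * H y)`,
`μ_H x = exp (−β * H x) / Z_H` and `F_H = −β⁻¹ * log Z_H`. -/
theorem gibbs_bogoliubov_strict
    {Ω : Type*} [Fintype Ω] [Nonempty Ω] (β : ℝ) (hβ : 0 < β) (H₁ H₂ : Ω → ℝ)
    (hne : ¬ ∃ c : ℝ, ∀ x : Ω, H₂ x - H₁ x = c) :
    -β⁻¹ * Real.log (∑ y : Ω, Real.exp (-β * H₂ y)) <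
      -β⁻¹ * Real.log (∑ y : Ω, Real.exp (-β * H₁ y)) +
        ∑ x : Ω, (Real.exp (-β * H₁ x) / ∑ y : Ω, Real.exp (-β * H₁ y)) * (H₂ x - H₁ x) := by
  classical
  set Z₁ : ℝ := ∑ y : Ω, Real.exp (-β * H₁ y) with hZ₁
  have hZ₁pos : 0 < Z₁ := Finset.sum_pos (fun y _ => Real.exp_pos _) Finset.univ_nonempty
  set w : Ω → ℝ := fun x => Real.exp (-β * H₁ x) / Z₁ with hw
  have hwpos : ∀ i ∈ Finset.univ, 0 < w i := fun i _ =>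
    div_pos (Real.exp_pos _) hZ₁pos
  have hwsum : ∑ i : Ω, w i = 1 := by
    rw [hw, ← Finset.sum_div, ← hZ₁, div_self hZ₁pos.ne']
  set g : Ω → ℝ := fun x => -β * (H₂ x - H₁ x) with hg
  have hp : ∃ j ∈ Finset.univ, ∃ k ∈ Finset.univ, g j ≠ g k := by
    by_contra h
    push_neg at h
    apply hne
    obtain ⟨x₀⟩ := ‹Nonempty Ω›
    refine ⟨H₂ x₀ - H₁ x₀, fun x => ?_⟩
    have := h x (Finset.mem_univ _) x₀ (Finset.mem_univ _)
    simp only [hg] at this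
    exact mul_left_cancel₀ (neg_ne_zero.mpr hβ.ne') this
  have jensen := strictConvexOn_exp.map_sum_lt hwpos hwsum
    (fun i _ => Set.mem_univ (g i)) hp
  -- ∑ exp(-β H₂ y) = Z₁ * ∑ w y * exp (g y)
  have hZ₂ : ∑ y : Ω, Real.exp (-β * H₂ y) = Z₁ * ∑ y : Ω, w y * Real.exp (g y) := by
    rw [Finset.mul_sum]
    refine Finset.sum_congr rfl fun y _ => ?_
    rw [hw, hg]
    field_simp
    rw [← Real.exp_add]
    ring_nf
  have hsumpos : 0 < ∑ y : Ω, w y * Real.exp (g y) :=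
    Finset.sum_pos (fun y hy => mul_pos (hwpos y hy) (Real.exp_pos _)) Finset.univ_nonempty
  have hlog : Real.log Z₁ + (-β) * ∑ x : Ω, w x * (H₂ x - H₁ x)
      < Real.log (∑ y : Ω, Real.exp (-β * H₂ y)) := by
    rw [hZ₂, Real.log_mul hZ₁pos.ne' hsumpos.ne']
    have h1 : (-β) * ∑ x : Ω, w x * (H₂ x - H₁ x) = ∑ i : Ω, w i • g i := by
      rw [Finset.mul_sum]
      exact Finset.sum_congr rfl fun x _ => by simp [hg]; ring
    rw [h1]
    have := Real.exp_lt_exp.mpr jensen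
    have h2 : ∑ i : Ω, w i • g i < Real.log (∑ y : Ω, w y * Real.exp (g y)) := by
      rw [Real.lt_log_iff_exp_lt hsumpos]
      calc Real.exp (∑ i : Ω, w i • g i) < ∑ i : Ω, w i • Real.exp (g i) := jensen
        _ = ∑ y : Ω, w y * Real.exp (g y) := by simp [smul_eq_mul]
    linarith
  have hβinv : 0 < β⁻¹ := inv_pos.mpr hβ
  have := mul_lt_mul_of_pos_left hlog hβinv
  have key : β⁻¹ * ((-β) * ∑ x : Ω, w x * (H₂ x - H₁ x)) = -∑ x : Ω, w x * (H₂ x - H₁ x) := by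
    field_simp
  nlinarith [this, key]
end

section
/- Let Ω be a finite nonempty set, β > 0, and H₁, H₂ : Ω → ℝ, with Gibbs measures μ_{H₁}, μ_{H₂} where μ_H(x) = exp(−β·H x)/∑_{y∈Ω} exp(−β·H y). If the two canonical ensembles assign the same expectation to the energy difference, i.e. ∑_x μ_{H₁}(x)·(H₂ x − H₁ x) = ∑_x μ_{H₂}(x)·(H₂ x − H₁ x), then H₂ − H₁ is a constant function on Ω. -/
lemma henderson_pair (β a b : ℝ) (hβ : 0 < β)
    (h : (a - b) * (Real.exp (-β * a) - Real.exp (-β * b)) = 0) : a = b := by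
  rcases lt_trichotomy a b with hab | hab | hab
  · exfalso
    have h1 : a - b < 0 := by linarith
    have h2 : Real.exp (-β * b) < Real.exp (-β * a) := by
      apply Real.exp_lt_exp.2; nlinarith
    nlinarith
  · exact hab
  · exfalso
    have h1 : 0 < a - b := by linarith
    have h2 : Real.exp (-β * a) < Real.exp (-β * b) := by
      apply Real.exp_lt_exp.2; nlinarith
    nlinarith

/-- Finite-state abstraction of Henderson's inverse theorem: if the two canonical (Gibbs)
ensembles of `H₁` and `H₂` assign the same expectation to the energy difference `H₂ − H₁`,
then `H₂ − H₁` is constant.  Here `μ_H x = exp (−β * H x) / ∑ y, exp (−β * H y)`. -/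
theorem henderson_finite_state
    {Ω : Type*} [Fintype Ω] [Nonempty Ω] (β : ℝ) (hβ : 0 < β) (H₁ H₂ : Ω → ℝ)
    (hexp :
      ∑ x : Ω, (Real.exp (-β * H₁ x) / ∑ y : Ω, Real.exp (-β * H₁ y)) * (H₂ x - H₁ x) =
      ∑ x : Ω, (Real.exp (-β * H₂ x) / ∑ y : Ω, Real.exp (-β * H₂ y)) * (H₂ x - H₁ x)) :
    ∃ c : ℝ, ∀ x : Ω, H₂ x - H₁ x = c := by
  set w : Ω → ℝ := fun x => Real.exp (-β * H₁ x) with hw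
  set v : Ω → ℝ := fun x => Real.exp (-β * H₂ x) with hv
  set f : Ω → ℝ := fun x => H₂ x - H₁ x with hf
  have hwpos : ∀ x, 0 < w x := fun x => Real.exp_pos _
  have hvpos : ∀ x, 0 < v x := fun x => Real.exp_pos _
  have hZ : 0 < ∑ y : Ω, w y := Finset.sum_pos (fun y _ => hwpos y) Finset.univ_nonempty
  have hZ' : 0 < ∑ y : Ω, v y := Finset.sum_pos (fun y _ => hvpos y) Finset.univ_nonempty
  -- turn hexp into a polynomial identity
  have key : (∑ x : Ω, w x * f x) * (∑ y : Ω, v y) = (∑ x : Ω, v x * f x) * (∑ y : Ω, w y) := by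
    have h1 : ∑ x : Ω, (w x / ∑ y : Ω, w y) * f x = (∑ x : Ω, w x * f x) / (∑ y : Ω, w y) := by
      rw [Finset.sum_div]; exact Finset.sum_congr rfl fun x _ => by ring
    have h2 : ∑ x : Ω, (v x / ∑ y : Ω, v y) * f x = (∑ x : Ω, v x * f x) / (∑ y : Ω, v y) := by
      rw [Finset.sum_div]; exact Finset.sum_congr rfl fun x _ => by ring
    have := hexp
    rw [show (∑ x : Ω, (Real.exp (-β * H₁ x) / ∑ y : Ω, Real.exp (-β * H₁ y)) * (H₂ x - H₁ x))
        = ∑ x : Ω, (w x / ∑ y : Ω, w y) * f x from rfl,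
      show (∑ x : Ω, (Real.exp (-β * H₂ x) / ∑ y : Ω, Real.exp (-β * H₂ y)) * (H₂ x - H₁ x))
        = ∑ x : Ω, (v x / ∑ y : Ω, v y) * f x from rfl, h1, h2] at this
    field_simp at this
    linarith [this]
  -- double-sum identity
  have S : ∑ x : Ω, ∑ y : Ω, w x * w y * ((f x - f y) * (v x / w x - v y / w y)) = 0 := by
    have expand : ∀ x y : Ω, w x * w y * ((f x - f y) * (v x / w x - v y / w y))
        = (v x * f x) * w y + (v y * f y) * w x - (w x * f x) * v y - (w y * f y) * v x := by
      intro x y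
      have hx0 : w x ≠ 0 := (hwpos x).ne'
      have hy0 : w y ≠ 0 := (hwpos y).ne'
      field_simp
      ring
    calc ∑ x : Ω, ∑ y : Ω, w x * w y * ((f x - f y) * (v x / w x - v y / w y))
        = ∑ x : Ω, ∑ y : Ω, ((v x * f x) * w y + (v y * f y) * w x
            - (w x * f x) * v y - (w y * f y) * v x) := by
          exact Finset.sum_congr rfl fun x _ => Finset.sum_congr rfl fun y _ => expand x y
      _ = 0 := by
          simp only [Finset.sum_sub_distrib, Finset.sum_add_distrib, ← Finset.sum_mul,
            ← Finset.mul_sum]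
          nlinarith [key]
  -- each term is nonpositive
  have hterm : ∀ x y : Ω, w x * w y * ((f x - f y) * (v x / w x - v y / w y)) ≤ 0 := by
    intro x y
    have hmono : (f x - f y) * (v x / w x - v y / w y) ≤ 0 := by
      have hratio : ∀ z : Ω, v z / w z = Real.exp (-β * f z) := by
        intro z
        rw [hv, hw, hf, ← Real.exp_sub]
        congr 1; ring
      rw [hratio x, hratio y]
      rcases le_total (f x) (f y) with h | h
      · have : Real.exp (-β * f y) ≤ Real.exp (-β * f x) := by
          apply Real.exp_le_exp.2; nlinarith
        nlinarith
      · have : Real.exp (-β * f x) ≤ Real.exp (-β * f y) := by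
          apply Real.exp_le_exp.2; nlinarith
        nlinarith
    have := mul_pos (hwpos x) (hwpos y)
    nlinarith
  have hzero : ∀ x y : Ω, w x * w y * ((f x - f y) * (v x / w x - v y / w y)) = 0 := by
    have houter := (Finset.sum_eq_zero_iff_of_nonpos
      (fun x _ => Finset.sum_nonpos (fun y _ => hterm x y))).1 S
    intro x y
    exact (Finset.sum_eq_zero_iff_of_nonpos (fun y _ => hterm x y)).1
      (houter x (Finset.mem_univ x)) y (Finset.mem_univ y)
  -- conclude
  obtain ⟨x₀⟩ := ‹Nonempty Ω›
  refine ⟨f x₀, fun x => ?_⟩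
  have h := hzero x x₀
  have hwne : w x * w x₀ ≠ 0 := by positivity
  have h2 : (f x - f x₀) * (v x / w x - v x₀ / w x₀) = 0 := by
    rcases mul_eq_zero.1 h with h' | h'
    · exact absurd h' hwne
    · exact h'
  have hratio : ∀ z : Ω, v z / w z = Real.exp (-β * f z) := by
    intro z
    rw [hv, hw, hf, ← Real.exp_sub]
    congr 1; ring
  rw [hratio x, hratio x₀] at h2
  exact henderson_pair β (f x) (f x₀) hβ h2
end

section
/- Let n ≥ 1, let c : Fin n → ℝ with c i > 0 for all i, and let β > 0. Define H : (Fin n → ℝ) → ℝ by H(x) = ∑_i c i · (x i)². Then both ∫ exp(−β·H(x)) dx and ∫ H(x)·exp(−β·H(x)) dx are finite (with respect to Lebesgue measure on ℝⁿ), the former is positive, and the canonical average satisfies (∫ H(x)·exp(−β·H(x)) dx) / (∫ exp(−β·H(x)) dx) = n/(2β). -/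
open MeasureTheory Real

lemma equip_integrable_sq_mul {b : ℝ} (hb : 0 < b) :
    Integrable (fun x : ℝ => x ^ 2 * Real.exp (-b * x ^ 2)) := by
  have h := integrable_rpow_mul_exp_neg_mul_sq hb (s := 2) (by norm_num)
  simpa [show ((2:ℕ):ℝ) = (2:ℝ) by norm_num, Real.rpow_natCast] using h

lemma equip_moment {b : ℝ} (hb : 0 < b) :
    ∫ x : ℝ, x ^ 2 * Real.exp (-b * x ^ 2)
      = (2 * b)⁻¹ * ∫ x : ℝ, Real.exp (-b * x ^ 2) := by
  have h1 : ∫ x : ℝ, x ^ 2 * Real.exp (-b * x ^ 2)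
      = 2 * ∫ x in Set.Ioi (0:ℝ), x ^ 2 * Real.exp (-b * x ^ 2) := by
    rw [← integral_comp_abs (f := fun x => x ^ 2 * Real.exp (-b * x ^ 2))]
    simp [sq_abs]
  have h2 : ∫ x in Set.Ioi (0:ℝ), x ^ 2 * Real.exp (-b * x ^ 2)
      = b ^ (-(2+1) / 2 : ℝ) * (1 / 2) * Real.Gamma ((2 + 1) / 2) := by
    rw [← integral_rpow_mul_exp_neg_mul_rpow (p := 2) (q := 2) (by norm_num) (by norm_num) hb]
    refine setIntegral_congr_fun measurableSet_Ioi fun x hx => ?_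
    norm_num [Real.rpow_natCast x 2, show ((2:ℕ):ℝ) = 2 by norm_num]
  have hgamma : Real.Gamma (((2:ℝ) + 1) / 2) = √π / 2 := by
    rw [show ((2:ℝ)+1)/2 = 1/2 + 1 by norm_num, Real.Gamma_add_one (by norm_num),
      Real.Gamma_one_half_eq]
    ring
  rw [h1, h2, hgamma, integral_gaussian]
  have hs : √b ≠ 0 := by positivity
  rw [Real.sqrt_div pi_pos.le,
    show (-((2:ℝ)+1)/2) = -(1/2) + -1 by norm_num, Real.rpow_add hb, Real.rpow_neg_one,
    Real.rpow_neg hb.le, ← Real.sqrt_eq_rpow]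
  field_simp

/-- Equipartition theorem for a positive-definite diagonal quadratic Hamiltonian
`H x = ∑ i, c i * (x i)^2` in `n` degrees of freedom: the canonical partition integral
`∫ exp (−β H)` and the energy integral `∫ H exp (−β H)` (Lebesgue measure on `ℝⁿ`) are
finite, the former is positive, and the canonical average energy equals `n / (2β)`. -/
theorem equipartition_diagonal_quadratic
    {n : ℕ} (hn : 1 ≤ n) (c : Fin n → ℝ) (hc : ∀ i, 0 < c i) (β : ℝ) (hβ : 0 < β) :
    let H : (Fin n → ℝ) → ℝ := fun x => ∑ i, c i * (x i) ^ 2;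
    Integrable (fun x : Fin n → ℝ => Real.exp (-β * H x)) ∧
    Integrable (fun x : Fin n → ℝ => H x * Real.exp (-β * H x)) ∧
    (0 < ∫ x : Fin n → ℝ, Real.exp (-β * H x)) ∧
    (∫ x : Fin n → ℝ, H x * Real.exp (-β * H x)) / (∫ x : Fin n → ℝ, Real.exp (-β * H x))
      = n / (2 * β) := by
  intro H
  set b : Fin n → ℝ := fun i => β * c i with hbdef
  have hb : ∀ i, 0 < b i := fun i => mul_pos hβ (hc i)
  -- single-coordinate Gaussian factors
  set g : Fin n → ℝ → ℝ := fun i y => Real.exp (-(b i) * y ^ 2) with hgdef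
  have hg_int : ∀ i, Integrable (g i) := fun i => integrable_exp_neg_mul_sq (hb i)
  have hg_pos : ∀ i, 0 < ∫ y : ℝ, g i y := by
    intro i
    simp only [hgdef, integral_gaussian]
    exact Real.sqrt_pos.mpr (div_pos pi_pos (hb i))
  -- pointwise factorization of the Boltzmann weight
  have hexp : (fun x : Fin n → ℝ => Real.exp (-β * H x)) = fun x => ∏ i, g i (x i) := by
    funext x
    simp only [hgdef]
    rw [← Real.exp_sum]
    congr 1
    simp only [H, Finset.mul_sum]
    exact Finset.sum_congr rfl fun i _ => by ring
  -- the per-term factor functions for the numerator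
  set f : Fin n → Fin n → ℝ → ℝ :=
    fun i j y => (if j = i then c i * y ^ 2 else 1) * g j y with hfdef
  have hf_int : ∀ i j, Integrable (f i j) := by
    intro i j
    simp only [hfdef]
    by_cases h : j = i
    · subst h
      simp only [if_pos rfl]
      have := (equip_integrable_sq_mul (hb j)).const_mul (c j)
      refine this.congr ?_
      filter_upwards with y
      simp only [hgdef, if_true]
      ring
    · simpa [h] using hg_int j
  have hf_val : ∀ i j, ∫ y : ℝ, f i j y
      = (if j = i then (2 * β)⁻¹ else 1) * ∫ y : ℝ, g j y := by
    intro i j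
    by_cases h : j = i
    · subst h
      simp only [hfdef, if_pos rfl, eq_self_iff_true, if_true]
      have : (fun y : ℝ => (c j * y ^ 2) * g j y)
          = fun y => c j * (y ^ 2 * Real.exp (-(b j) * y ^ 2)) := by
        funext y; simp only [hgdef]; ring
      rw [this, integral_const_mul, equip_moment (hb j)]
      have hcj := (hc j).ne'
      have hbj := (hb j).ne'
      simp only [hgdef, hbdef]
      field_simp
    · simp [hfdef, h]
  -- pointwise factorization of the energy integrand
  have hnum : (fun x : Fin n → ℝ => H x * Real.exp (-β * H x))
      = fun x => ∑ i, ∏ j, f i j (x j) := by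
    funext x
    have hFi : ∀ i, ∏ j, f i j (x j) = (c i * (x i) ^ 2) * ∏ j, g j (x j) := by
      intro i
      simp only [hfdef]
      rw [Finset.prod_mul_distrib]
      congr 1
      rw [Finset.prod_eq_single i (fun j _ hj => by simp [hj]) (by simp)]
      simp
    simp only [hFi]
    rw [congrFun hexp x]
    simp only [H, ← Finset.sum_mul]
  have hZint : Integrable (fun x : Fin n → ℝ => Real.exp (-β * H x)) := by
    rw [hexp]; exact Integrable.fintype_prod hg_int
  have hZval : (∫ x : Fin n → ℝ, Real.exp (-β * H x)) = ∏ i, ∫ y : ℝ, g i y := by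
    rw [hexp]; exact integral_fintype_prod_eq_prod (ι := Fin n) g
  have hZpos : 0 < ∫ x : Fin n → ℝ, Real.exp (-β * H x) := by
    rw [hZval]; exact Finset.prod_pos fun i _ => hg_pos i
  have hNint : Integrable (fun x : Fin n → ℝ => H x * Real.exp (-β * H x)) := by
    rw [hnum]
    exact integrable_finset_sum _ fun i _ => Integrable.fintype_prod (hf_int i)
  have hNval : (∫ x : Fin n → ℝ, H x * Real.exp (-β * H x))
      = (n : ℝ) * ((2 * β)⁻¹ * ∏ i, ∫ y : ℝ, g i y) := by
    rw [hnum, integral_finset_sum (μ := volume) _ fun i _ => Integrable.fintype_prod (hf_int i)]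
    have : ∀ i : Fin n, (∫ x : Fin n → ℝ, ∏ j, f i j (x j))
        = (2 * β)⁻¹ * ∏ j, ∫ y : ℝ, g j y := by
      intro i
      rw [show (∫ x : Fin n → ℝ, ∏ j, f i j (x j)) = ∏ j, ∫ y : ℝ, f i j y from
          integral_fintype_prod_eq_prod (ι := Fin n) (f i)]
      calc ∏ j, ∫ y : ℝ, f i j y
          = ∏ j, ((if j = i then (2 * β)⁻¹ else 1) * ∫ y : ℝ, g j y) :=
            Finset.prod_congr rfl fun j _ => hf_val i j
        _ = (∏ j, (if j = i then (2 * β)⁻¹ else 1)) * ∏ j, ∫ y : ℝ, g j y :=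
            Finset.prod_mul_distrib
        _ = (2 * β)⁻¹ * ∏ j, ∫ y : ℝ, g j y := by
            rw [Finset.prod_eq_single i (fun j _ hj => by simp [hj]) (by simp)]
            simp
    simp only [this, Finset.sum_const, Finset.card_univ, Fintype.card_fin, nsmul_eq_mul]
  refine ⟨hZint, hNint, hZpos, ?_⟩
  rw [hNval, hZval]
  have hP : (∏ i, ∫ y : ℝ, g i y) ≠ 0 := (Finset.prod_pos fun i _ => hg_pos i).ne'
  field_simp
end

section
/- Let N ≥ 1, m > 0, β > 0, and let φ : (Fin N → EuclideanSpace ℝ (Fin 3)) → ℝ be measurable with 0 < ∫ exp(−β·φ(r)) dr < ∞. Define the Hamiltonian H(r, p) = ∑_{i=1}^N ‖p i‖²/(2m) + φ(r) on configuration–momentum space and the partition normalization Z = ∫∫ exp(−β·H(r,p)) dr dp. Then for every p₁ ∈ EuclideanSpace ℝ (Fin 3), integrating the canonical density Z⁻¹·exp(−β·H) over all positions r and over the momenta p₂, …, p_N gives the Maxwell–Boltzmann marginal density ρ(p₁) = (2π·m·β⁻¹)^{−3/2} · exp(−β·‖p₁‖²/(2m)). -/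
open MeasureTheory Real

/-- Maxwell–Boltzmann distribution: in a classical system of `n + 1` particles in `ℝ³` with
Hamiltonian `H (r, p) = ∑ i, ‖p i‖² / (2m) + φ r` and canonical density `Z⁻¹ exp (−β H)`,
integrating over all positions and over the momenta of all but one particle yields the
Gaussian marginal `(2π m β⁻¹)^(−3/2) * exp (−β ‖p₁‖² / (2m))` for the remaining momentum. -/
theorem maxwell_boltzmann_marginal
    (n : ℕ) (m β : ℝ) (hm : 0 < m) (hβ : 0 < β)
    (φ : (Fin (n + 1) → EuclideanSpace ℝ (Fin 3)) → ℝ) (hφ : Measurable φ)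
    (hpos : 0 < ∫ r : Fin (n + 1) → EuclideanSpace ℝ (Fin 3), Real.exp (-β * φ r))
    (hint : Integrable fun r : Fin (n + 1) → EuclideanSpace ℝ (Fin 3) =>
      Real.exp (-β * φ r)) :
    let H : (Fin (n + 1) → EuclideanSpace ℝ (Fin 3)) →
        (Fin (n + 1) → EuclideanSpace ℝ (Fin 3)) → ℝ :=
      fun r p => (∑ i, ‖p i‖ ^ 2 / (2 * m)) + φ r;
    let Z : ℝ := ∫ r : Fin (n + 1) → EuclideanSpace ℝ (Fin 3),
      ∫ p : Fin (n + 1) → EuclideanSpace ℝ (Fin 3), Real.exp (-β * H r p);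
    ∀ p₁ : EuclideanSpace ℝ (Fin 3),
      (∫ r : Fin (n + 1) → EuclideanSpace ℝ (Fin 3),
        ∫ ps : Fin n → EuclideanSpace ℝ (Fin 3),
          Z⁻¹ * Real.exp (-β * H r (Fin.cons p₁ ps)))
      = (2 * Real.pi * m * β⁻¹) ^ (-(3 : ℝ) / 2) * Real.exp (-β * ‖p₁‖ ^ 2 / (2 * m)) := by
  intro H Z p₁
  have h2m : (0:ℝ) < β / (2*m) := by positivity
  set g : EuclideanSpace ℝ (Fin 3) → ℝ := fun v => Real.exp (-(β/(2*m)) * ‖v‖^2) with hg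
  set I : ℝ := ∫ v : EuclideanSpace ℝ (Fin 3), g v with hIdef
  have hI : I = (2*Real.pi*m*β⁻¹) ^ ((3:ℝ)/2) := by
    rw [hIdef, hg, GaussianFourier.integral_rexp_neg_mul_sq_norm h2m]
    have h3 : (Module.finrank ℝ (EuclideanSpace ℝ (Fin 3)) : ℝ) = 3 := by simp
    rw [h3]
    congr 1
    rw [div_div_eq_mul_div, eq_comm, mul_comm (2*Real.pi*m) β⁻¹, inv_mul_eq_div,
      div_eq_div_iff (ne_of_gt hβ) (ne_of_gt hβ)]
    ring
  have hIpos : 0 < I := by rw [hI]; positivity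
  -- decomposition of the Boltzmann factor
  have hdec : ∀ (r p : Fin (n + 1) → EuclideanSpace ℝ (Fin 3)),
      Real.exp (-β * H r p) = Real.exp (-β * φ r) * ∏ i, g (p i) := by
    intro r p
    have h1 : -β * H r p = -β * φ r + ∑ i, (-(β/(2*m)) * ‖p i‖^2) := by
      have h2 : ∑ i : Fin (n+1), (-(β/(2*m)) * ‖p i‖^2)
          = -β * ∑ i : Fin (n+1), ‖p i‖^2/(2*m) := by
        rw [Finset.mul_sum]
        exact Finset.sum_congr rfl (fun i _ => by field_simp)
      rw [h2]; show -β * ((∑ i, ‖p i‖ ^ 2 / (2 * m)) + φ r) = _; ring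
    rw [h1, Real.exp_add, Real.exp_sum]
  -- compute Z
  set A : ℝ := ∫ r : Fin (n + 1) → EuclideanSpace ℝ (Fin 3), Real.exp (-β * φ r) with hA
  have hZ : Z = A * I ^ (n+1) := by
    show (∫ r : Fin (n + 1) → EuclideanSpace ℝ (Fin 3),
      ∫ p : Fin (n + 1) → EuclideanSpace ℝ (Fin 3), Real.exp (-β * H r p)) = _
    have : ∀ r : Fin (n + 1) → EuclideanSpace ℝ (Fin 3),
        (∫ p : Fin (n + 1) → EuclideanSpace ℝ (Fin 3), Real.exp (-β * H r p))
        = Real.exp (-β * φ r) * I ^ (n+1) := by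
      intro r
      simp_rw [hdec r]
      rw [integral_const_mul, volume_pi, integral_fintype_prod_eq_pow (ι := Fin (n+1)) g,
        Fintype.card_fin]
    simp_rw [this]
    rw [integral_mul_const]
  -- inner integral
  have hinner : ∀ r : Fin (n + 1) → EuclideanSpace ℝ (Fin 3),
      (∫ ps : Fin n → EuclideanSpace ℝ (Fin 3),
        Z⁻¹ * Real.exp (-β * H r (Fin.cons p₁ ps)))
      = Z⁻¹ * (Real.exp (-β * φ r) * (g p₁ * I ^ n)) := by
    intro r
    rw [integral_const_mul]
    congr 1
    have : ∀ ps : Fin n → EuclideanSpace ℝ (Fin 3),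
        Real.exp (-β * H r (Fin.cons p₁ ps))
        = Real.exp (-β * φ r) * g p₁ * ∏ j, g (ps j) := by
      intro ps
      rw [hdec r (Fin.cons p₁ ps), Fin.prod_univ_succ]
      simp only [Fin.cons_zero, Fin.cons_succ]
      ring
    simp_rw [this]
    rw [MeasureTheory.integral_const_mul, volume_pi, integral_fintype_prod_eq_pow (ι := Fin n) g,
      Fintype.card_fin]
    ring
  simp_rw [hinner]
  rw [MeasureTheory.integral_const_mul, MeasureTheory.integral_mul_const, ← hA]
  have hAne : A ≠ 0 := ne_of_gt hpos
  have hIne : I ≠ 0 := ne_of_gt hIpos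
  have hgp : g p₁ = Real.exp (-β * ‖p₁‖ ^ 2 / (2 * m)) :=
    congrArg Real.exp (by ring)
  have hbase : (0:ℝ) ≤ 2 * Real.pi * m * β⁻¹ := by positivity
  have key : ∀ a i e : ℝ, a ≠ 0 → i ≠ 0 →
      (a * i ^ (n + 1))⁻¹ * (a * (e * i ^ n)) = i⁻¹ * e := by
    intro a i e ha hi
    rw [pow_succ]
    field_simp
  rw [hZ, hgp, key A I _ hAne hIne,
    show (-(3:ℝ)/2) = -((3:ℝ)/2) by norm_num, Real.rpow_neg hbase, ← hI]
end

section
/- Let μ be a finite Borel measure on ℝ and λ ∈ ℝ. For ε > 0 and t ∈ ℝ set G_ε(t) = ∫_ℝ ε/((s − t)² + ε²) dμ(s). Then: (i) for every δ > 0, lim_{ε→0⁺} (1/π)·∫_{(−∞, λ+δ]} G_ε(t) dt = (μ((−∞, λ+δ)) + μ((−∞, λ+δ]))/2; and (ii) the iterated limit lim_{δ→0⁺} lim_{ε→0⁺} (1/π)·∫_{(−∞, λ+δ]} G_ε(t) dt = μ((−∞, λ]). -/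
open MeasureTheory Filter Topology Set Real

lemma key_integrable {ε : ℝ} (hε : 0 < ε) (s : ℝ) :
    Integrable (fun t : ℝ => ε / ((s - t) ^ 2 + ε ^ 2)) := by
  have h : Integrable (fun t : ℝ => ε⁻¹ * (1 + ((t - s) / ε) ^ 2)⁻¹) :=
    ((integrable_inv_one_add_sq.comp_div hε.ne').comp_sub_right s).const_mul _
  refine h.congr (Eventually.of_forall fun t => ?_)
  have h1 : (s - t) ^ 2 + ε ^ 2 ≠ 0 := by positivity
  field_simp
  ring

lemma key_integral {ε : ℝ} (hε : 0 < ε) (s a : ℝ) :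
    ∫ t in Set.Iic a, ε / ((s - t) ^ 2 + ε ^ 2)
      = Real.arctan ((a - s) / ε) + π / 2 := by
  have hD : ∀ t : ℝ, HasDerivAt (fun t : ℝ => Real.arctan ((t - s) / ε))
      (ε / ((s - t) ^ 2 + ε ^ 2)) t := by
    intro t
    have h1 : HasDerivAt (fun t : ℝ => (t - s) / ε) (1 / ε) t :=
      ((hasDerivAt_id t).sub_const s).div_const ε
    have h2 := (Real.hasDerivAt_arctan ((t - s) / ε)).comp t h1
    refine HasDerivAt.congr_deriv h2 ?_
    have h3 : (s - t) ^ 2 + ε ^ 2 ≠ 0 := by positivity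
    have h4 : 1 + ((t - s) / ε) ^ 2 ≠ 0 := by positivity
    field_simp
    ring
  have := integral_Iic_of_hasDerivAt_of_tendsto'
    (f := fun t : ℝ => Real.arctan ((t - s) / ε))
    (f' := fun t : ℝ => ε / ((s - t) ^ 2 + ε ^ 2)) (a := a) (m := -(π / 2))
    (fun t _ => hD t) (key_integrable hε s).integrableOn ?_
  · rw [this]; ring
  · have h : Tendsto (fun t : ℝ => (t - s) / ε) atBot atBot := by
      apply Tendsto.atBot_div_const hε
      exact tendsto_atBot_add_const_right _ _ tendsto_id
    exact (tendsto_nhds_of_tendsto_nhdsWithin Real.tendsto_arctan_atBot).comp h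

lemma arctan_bdd (x : ℝ) : |Real.arctan x + π / 2| ≤ π := by
  have h1 := Real.arctan_lt_pi_div_two x
  have h2 := Real.neg_pi_div_two_lt_arctan x
  rw [abs_le]; constructor <;> linarith [Real.pi_pos]

lemma key_swap (μ : Measure ℝ) [IsFiniteMeasure μ] {ε : ℝ} (hε : 0 < ε) (a : ℝ) :
    ∫ t in Set.Iic a, (∫ s : ℝ, ε / ((s - t) ^ 2 + ε ^ 2) ∂μ)
      = ∫ s : ℝ, (Real.arctan ((a - s) / ε) + π / 2) ∂μ := by
  have hcont : Continuous (fun p : ℝ × ℝ => ε / ((p.1 - p.2) ^ 2 + ε ^ 2)) := by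
    apply continuous_const.div (by fun_prop)
    intro p; positivity
  have hmeas : AEStronglyMeasurable (fun p : ℝ × ℝ => ε / ((p.1 - p.2) ^ 2 + ε ^ 2))
      (μ.prod (volume.restrict (Set.Iic a))) := hcont.aestronglyMeasurable
  have hint : Integrable (fun p : ℝ × ℝ => ε / ((p.1 - p.2) ^ 2 + ε ^ 2))
      (μ.prod (volume.restrict (Set.Iic a))) := by
    rw [integrable_prod_iff hmeas]
    constructor
    · exact Eventually.of_forall fun s => (key_integrable hε s).integrableOn
    · have heq : ∀ s : ℝ, (∫ t in Set.Iic a, ‖ε / ((s - t) ^ 2 + ε ^ 2)‖)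
          = Real.arctan ((a - s) / ε) + π / 2 := by
        intro s
        rw [← key_integral hε s a]
        refine integral_congr_ae (Eventually.of_forall fun t => ?_)
        simp only [Real.norm_eq_abs]; exact abs_of_nonneg (by positivity)
      refine (integrable_const π).mono' ?_ ?_
      · refine (Continuous.aestronglyMeasurable ?_).congr
          (Eventually.of_forall fun s => (heq s).symm)
        exact ((Real.continuous_arctan.comp (by fun_prop)).add continuous_const)
      · refine Eventually.of_forall fun s => ?_
        rw [heq s, Real.norm_eq_abs]
        exact arctan_bdd _
  have := integral_integral_swap (f := fun s t : ℝ => ε / ((s - t) ^ 2 + ε ^ 2))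
    (μ := μ) (ν := volume.restrict (Set.Iic a)) hint
  rw [← this]
  exact integral_congr_ae (Eventually.of_forall fun s => key_integral hε s a)

noncomputable def limfn (a : ℝ) : ℝ → ℝ :=
  fun s => π * ((Set.Iio a).indicator 1 s + (Set.Iic a).indicator 1 s) / 2

lemma limfn_integral (μ : Measure ℝ) [IsFiniteMeasure μ] (a : ℝ) :
    ∫ s, limfn a s ∂μ = π * ((μ (Set.Iio a)).toReal + (μ (Set.Iic a)).toReal) / 2 := by
  have h1 : Integrable ((Set.Iio a).indicator (1 : ℝ → ℝ)) μ :=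
    (integrable_const 1).indicator measurableSet_Iio
  have h2 : Integrable ((Set.Iic a).indicator (1 : ℝ → ℝ)) μ :=
    (integrable_const 1).indicator measurableSet_Iic
  have he : ∀ s, limfn a s
      = (π / 2) * ((Set.Iio a).indicator 1 s + (Set.Iic a).indicator 1 s) := by
    intro s; rw [limfn]; ring
  simp only [he]
  rw [MeasureTheory.integral_const_mul, integral_add h1 h2,
    integral_indicator_one measurableSet_Iio, integral_indicator_one measurableSet_Iic]
  simp only [measureReal_def]
  ring

lemma key_ptwise (a s : ℝ) :
    Tendsto (fun ε : ℝ => Real.arctan ((a - s) / ε) + π / 2) (𝓝[>] 0)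
      (𝓝 (limfn a s)) := by
  rcases lt_trichotomy s a with h | h | h
  · have hv : limfn a s = π := by
      simp [limfn, indicator_of_mem, h.le, h, Set.mem_Iio, Set.mem_Iic]; ring
    rw [hv]
    have ht : Tendsto (fun ε : ℝ => (a - s) / ε) (𝓝[>] 0) atTop := by
      simp only [div_eq_mul_inv]
      exact Tendsto.const_mul_atTop (by linarith) tendsto_inv_nhdsGT_zero
    have := (tendsto_nhds_of_tendsto_nhdsWithin Real.tendsto_arctan_atTop).comp ht
    have := this.add_const (π / 2)
    convert this using 2
    · simp only [Function.comp_apply]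
    · ring
  · subst h
    have hv : limfn s s = π / 2 := by
      simp [limfn, Set.indicator_apply]
    rw [hv]
    refine Tendsto.congr' ?_ tendsto_const_nhds
    filter_upwards [self_mem_nhdsWithin] with ε (hε : 0 < ε)
    simp
  · have hv : limfn a s = 0 := by
      simp [limfn, indicator_of_notMem, not_lt.mpr h.le, not_le.mpr h,
        Set.mem_Iio, Set.mem_Iic]
    rw [hv]
    have ht : Tendsto (fun ε : ℝ => (a - s) / ε) (𝓝[>] 0) atBot := by
      simp only [div_eq_mul_inv]
      exact Tendsto.const_mul_atTop_of_neg (by linarith) tendsto_inv_nhdsGT_zero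
    have := (tendsto_nhds_of_tendsto_nhdsWithin Real.tendsto_arctan_atBot).comp ht
    have h2 := this.add_const (π / 2)
    convert h2 using 2
    · simp only [Function.comp_apply]
    · ring

lemma key_dct (μ : Measure ℝ) [IsFiniteMeasure μ] (a : ℝ) :
    Tendsto (fun ε : ℝ => ∫ s, (Real.arctan ((a - s) / ε) + π / 2) ∂μ) (𝓝[>] 0)
      (𝓝 (∫ s, limfn a s ∂μ)) := by
  refine tendsto_integral_filter_of_dominated_convergence (fun _ => π) ?_ ?_
    (integrable_const π) ?_
  · refine Eventually.of_forall fun ε => Continuous.aestronglyMeasurable ?_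
    exact (Real.continuous_arctan.comp (by fun_prop)).add continuous_const
  · exact Eventually.of_forall fun ε => Eventually.of_forall fun s => arctan_bdd _
  · exact Eventually.of_forall fun s => key_ptwise a s

lemma cdf_right_cont (μ : Measure ℝ) [IsFiniteMeasure μ] (l : ℝ) :
    Tendsto (fun n : ℕ => (μ (Set.Iic (l + 1 / (n + 1)))).toReal) atTop
      (𝓝 (μ (Set.Iic l)).toReal) := by
  have hset : ⋂ n : ℕ, Set.Iic (l + 1 / (n + 1 : ℝ)) = Set.Iic l := by
    ext x
    simp only [Set.mem_iInter, Set.mem_Iic]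
    constructor
    · intro h
      by_contra hx
      push_neg at hx
      obtain ⟨n, hn⟩ := exists_nat_one_div_lt (show 0 < x - l by linarith)
      exact absurd (h n) (by linarith)
    · intro h n
      have : 0 < 1 / (n + 1 : ℝ) := by positivity
      linarith
  have := tendsto_measure_iInter_atTop (μ := μ) (s := fun n : ℕ => Set.Iic (l + 1 / (n + 1)))
    (fun n => (measurableSet_Iic).nullMeasurableSet)
    (fun m n hmn => by
      apply Set.Iic_subset_Iic.mpr
      have : (1 : ℝ) / (n + 1) ≤ 1 / (m + 1) := by
        apply one_div_le_one_div_of_le (by positivity)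
        have h' : (m : ℝ) ≤ n := by exact_mod_cast hmn
        linarith
      linarith)
    ⟨0, measure_ne_top μ _⟩
  rw [hset] at this
  exact (ENNReal.tendsto_toReal (measure_ne_top μ _)).comp this

/-- Stieltjes inversion formula for a finite Borel measure `μ` on `ℝ`: with
`G_ε t = ∫ ε / ((s − t)² + ε²) dμ(s)`, (i) for every `δ > 0`,
`(1/π) ∫_{(−∞, λ+δ]} G_ε t dt → (μ(−∞, λ+δ) + μ(−∞, λ+δ]) / 2` as `ε → 0⁺`, and
(ii) this limit tends to `μ(−∞, λ]` as `δ → 0⁺`, so the iterated limit recovers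
`μ((−∞, λ])`. -/
theorem stieltjes_inversion
    (μ : Measure ℝ) [IsFiniteMeasure μ] (l : ℝ) :
    (∀ δ : ℝ, 0 < δ →
      Tendsto
        (fun ε : ℝ => (1 / Real.pi) *
          ∫ t in Set.Iic (l + δ), (∫ s : ℝ, ε / ((s - t) ^ 2 + ε ^ 2) ∂μ))
        (𝓝[>] 0)
        (𝓝 (((μ (Set.Iio (l + δ))).toReal + (μ (Set.Iic (l + δ))).toReal) / 2))) ∧
    Tendsto
      (fun δ : ℝ => ((μ (Set.Iio (l + δ))).toReal + (μ (Set.Iic (l + δ))).toReal) / 2)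
      (𝓝[>] 0) (𝓝 (μ (Set.Iic l)).toReal) := by
  constructor
  · intro δ hδ
    set a := l + δ with ha
    have h1 := (key_dct μ a).const_mul (1 / π)
    rw [limfn_integral μ a] at h1
    have hπ : π ≠ 0 := Real.pi_ne_zero
    have hlim : (1 / π) * (π * ((μ (Set.Iio a)).toReal + (μ (Set.Iic a)).toReal) / 2)
        = ((μ (Set.Iio a)).toReal + (μ (Set.Iic a)).toReal) / 2 := by
      field_simp
    rw [hlim] at h1
    refine h1.congr' ?_
    filter_upwards [self_mem_nhdsWithin] with ε (hε : 0 < ε)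
    rw [key_swap μ hε a]
  · set c := (μ (Set.Iic l)).toReal with hc
    rw [Metric.tendsto_nhdsWithin_nhds]
    intro η hη
    obtain ⟨N, hN⟩ := (Metric.tendsto_atTop.mp (cdf_right_cont μ l)) η hη
    have hNd := hN N le_rfl
    rw [Real.dist_eq] at hNd
    set d : ℝ := 1 / (N + 1) with hd
    have hd0 : 0 < d := by positivity
    refine ⟨d, hd0, fun δ (hδ : 0 < δ) hdist => ?_⟩
    rw [Real.dist_eq] at hdist ⊢
    rw [sub_zero, abs_of_pos hδ] at hdist
    have hmono : ∀ s t : Set ℝ, s ⊆ t → (μ s).toReal ≤ (μ t).toReal := fun s t hst =>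
      ENNReal.toReal_mono (measure_ne_top μ _) (measure_mono hst)
    have hlow1 : c ≤ (μ (Set.Iio (l + δ))).toReal :=
      hmono _ _ (fun x hx => by
        simp only [Set.mem_Iic] at hx; simp only [Set.mem_Iio]; linarith)
    have hlow2 : c ≤ (μ (Set.Iic (l + δ))).toReal :=
      hmono _ _ (Set.Iic_subset_Iic.mpr (by linarith))
    have hup1 : (μ (Set.Iio (l + δ))).toReal ≤ (μ (Set.Iic (l + d))).toReal :=
      hmono _ _ (fun x hx => by
        simp only [Set.mem_Iio] at hx; simp only [Set.mem_Iic]; linarith)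
    have hup2 : (μ (Set.Iic (l + δ))).toReal ≤ (μ (Set.Iic (l + d))).toReal :=
      hmono _ _ (Set.Iic_subset_Iic.mpr (by linarith))
    have hcle : c ≤ (μ (Set.Iic (l + d))).toReal :=
      hmono _ _ (Set.Iic_subset_Iic.mpr (by linarith))
    have hup : (μ (Set.Iic (l + d))).toReal < c + η := by
      rcases abs_lt.mp hNd with ⟨_, h2⟩
      linarith
    rw [abs_lt]
    constructor <;> linarith
end

section
/- Let n ≥ 1 and let ρ₁, ρ₂ be n×n complex matrices that are Hermitian, positive definite, and of trace 1. With log ρ_i denoting the matrix logarithm obtained by applying the real logarithm to ρ_i through the continuous functional calculus for selfadjoint matrices, one has Re(trace(ρ₁ · log ρ₂)) ≤ Re(trace(ρ₁ · log ρ₁)). -/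
open Matrix
open scoped ComplexOrder

/-- Pointwise key inequality: `p * log q ≤ p * log p + (q - p)` for `p, q > 0`. -/
lemma klein_pointwise {p q : ℝ} (hp : 0 < p) (hq : 0 < q) :
    p * Real.log q ≤ p * Real.log p + (q - p) := by
  have h := Real.log_le_sub_one_of_pos (div_pos hq hp)
  rw [Real.log_div hq.ne' hp.ne'] at h
  have h2 := mul_le_mul_of_nonneg_left h hp.le
  have key : p * (q / p - 1) = q - p := by field_simp
  rw [key, mul_sub] at h2
  linarith

/-- The real-number core of Klein's inequality: doubly stochastic averaging. -/
lemma klein_real {n : ℕ} (p q : Fin n → ℝ) (w : Fin n → Fin n → ℝ)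
    (hp : ∀ i, 0 < p i) (hq : ∀ j, 0 < q j) (hw : ∀ i j, 0 ≤ w i j)
    (hrow : ∀ i, ∑ j, w i j = 1) (hcol : ∀ j, ∑ i, w i j = 1)
    (hps : ∑ i, p i = 1) (hqs : ∑ j, q j = 1) :
    ∑ i, ∑ j, p i * Real.log (q j) * w i j ≤ ∑ i, p i * Real.log (p i) := by
  have step : ∑ i, ∑ j, p i * Real.log (q j) * w i j ≤
      ∑ i, ∑ j, (p i * Real.log (p i) * w i j + (q j * w i j - p i * w i j)) := by
    refine Finset.sum_le_sum fun i _ => Finset.sum_le_sum fun j _ => ?_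
    have h := klein_pointwise (hp i) (hq j)
    nlinarith [hw i j, mul_le_mul_of_nonneg_right h (hw i j)]
  refine step.trans (le_of_eq ?_)
  have e1 : ∑ i, ∑ j, (p i * Real.log (p i) * w i j + (q j * w i j - p i * w i j))
      = (∑ i, ∑ j, p i * Real.log (p i) * w i j) + ((∑ i, ∑ j, q j * w i j)
        - ∑ i, ∑ j, p i * w i j) := by
    simp [Finset.sum_add_distrib, Finset.sum_sub_distrib]
  rw [e1]
  have e2 : ∑ i, ∑ j, p i * Real.log (p i) * w i j = ∑ i, p i * Real.log (p i) := by
    refine Finset.sum_congr rfl fun i _ => ?_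
    rw [← Finset.mul_sum, hrow i, mul_one]
  have e3 : ∑ i, ∑ j, q j * w i j = 1 := by
    rw [Finset.sum_comm]
    calc ∑ j, ∑ i, q j * w i j = ∑ j, q j := by
          refine Finset.sum_congr rfl fun j _ => ?_
          rw [← Finset.mul_sum, hcol j, mul_one]
      _ = 1 := hqs
  have e4 : ∑ i, ∑ j, p i * w i j = 1 := by
    calc ∑ i, ∑ j, p i * w i j = ∑ i, p i := by
          refine Finset.sum_congr rfl fun i _ => ?_
          rw [← Finset.mul_sum, hrow i, mul_one]
      _ = 1 := hps
  rw [e2, e3, e4]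
  ring

/-- Trace formula for `A * cfc f B` via the spectral theorem. -/
lemma trace_mul_cfc_formula {n : ℕ} (A B : Matrix (Fin n) (Fin n) ℂ)
    (hA : A.IsHermitian) (hB : B.IsHermitian) (f : ℝ → ℝ) :
    (A * cfc f B).trace =
      (↑(∑ i, ∑ j, hA.eigenvalues i * f (hB.eigenvalues j) *
        Complex.normSq ((star (hA.eigenvectorUnitary : Matrix (Fin n) (Fin n) ℂ) *
          (hB.eigenvectorUnitary : Matrix (Fin n) (Fin n) ℂ)) i j)) : ℂ) := by
  set U : Matrix (Fin n) (Fin n) ℂ := (hA.eigenvectorUnitary : Matrix (Fin n) (Fin n) ℂ)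
  set V : Matrix (Fin n) (Fin n) ℂ := (hB.eigenvectorUnitary : Matrix (Fin n) (Fin n) ℂ)
  set M : Matrix (Fin n) (Fin n) ℂ := star U * V with hM
  have hUV : U * star U = 1 := (Matrix.mem_unitaryGroup_iff).mp hA.eigenvectorUnitary.2
  set D : Matrix (Fin n) (Fin n) ℂ := diagonal (RCLike.ofReal ∘ hA.eigenvalues)
  set E : Matrix (Fin n) (Fin n) ℂ := diagonal (RCLike.ofReal ∘ f ∘ hB.eigenvalues)
  have key : A * cfc f B = U * (D * M * E * star M) * star U := by
    rw [hB.cfc_eq f, Matrix.IsHermitian.cfc]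
    conv_lhs => rw [hA.spectral_theorem]
    simp only [Unitary.conjStarAlgAut_apply]
    have hstarM : star M = star V * U := by rw [hM, StarMul.star_mul, star_star]
    rw [hstarM, hM]
    simp only [Matrix.mul_assoc]
    rw [hUV, Matrix.mul_one]
  have hVU : star U * U = 1 := (Matrix.mem_unitaryGroup_iff').mp hA.eigenvectorUnitary.2
  rw [key, Matrix.trace_mul_cycle, ← Matrix.mul_assoc, hVU, Matrix.one_mul]
  have : (D * M * E * star M).trace = ∑ i, ∑ j, (D * M * E) i j * (star M) j i := by
    simp [Matrix.trace, Matrix.diag, Matrix.mul_apply]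
  rw [this]
  push_cast
  refine Finset.sum_congr rfl fun i _ => Finset.sum_congr rfl fun j _ => ?_
  have h1 : (D * M * E) i j = (hA.eigenvalues i : ℂ) * M i j * (f (hB.eigenvalues j) : ℂ) := by
    simp [D, E, Matrix.mul_diagonal, Matrix.diagonal_mul]
  rw [h1]
  have h2 : (star M) j i = star (M i j) := rfl
  rw [h2]
  have h3 : M i j * star (M i j) = (Complex.normSq (M i j) : ℂ) := Complex.mul_conj _
  rw [← h3]
  ring

/-- The eigenvalues of a trace-one Hermitian matrix sum to one. -/
lemma sum_eigenvalues_eq_one {n : ℕ} (A : Matrix (Fin n) (Fin n) ℂ)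
    (hA : A.IsHermitian) (h : A.trace = 1) : ∑ i, hA.eigenvalues i = 1 := by
  have ht : A.trace = ∑ i, (hA.eigenvalues i : ℂ) := by
    conv_lhs => rw [hA.spectral_theorem]
    rw [Unitary.conjStarAlgAut_apply]
    rw [Matrix.trace_mul_cycle,
      (Matrix.mem_unitaryGroup_iff').mp hA.eigenvectorUnitary.2, Matrix.one_mul,
      Matrix.trace_diagonal]
    simp
  rw [ht] at h
  exact_mod_cast h

/-- Klein's (Gibbs') inequality for density matrices: if `ρ₁, ρ₂` are Hermitian, positive
definite matrices of trace one, and `log` is the matrix logarithm given by the continuous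
functional calculus for selfadjoint matrices, then
`Re (trace (ρ₁ * log ρ₂)) ≤ Re (trace (ρ₁ * log ρ₁))`. -/
theorem klein_inequality
    {n : ℕ} (hn : 1 ≤ n) (ρ₁ ρ₂ : Matrix (Fin n) (Fin n) ℂ)
    (h₁ : ρ₁.IsHermitian) (h₂ : ρ₂.IsHermitian)
    (hp₁ : ρ₁.PosDef) (hp₂ : ρ₂.PosDef)
    (ht₁ : ρ₁.trace = 1) (ht₂ : ρ₂.trace = 1) :
    ((ρ₁ * cfc Real.log ρ₂).trace).re ≤ ((ρ₁ * cfc Real.log ρ₁).trace).re := by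
  set U₁ : Matrix (Fin n) (Fin n) ℂ := (h₁.eigenvectorUnitary : Matrix (Fin n) (Fin n) ℂ)
  set U₂ : Matrix (Fin n) (Fin n) ℂ := (h₂.eigenvectorUnitary : Matrix (Fin n) (Fin n) ℂ)
  set M : Matrix (Fin n) (Fin n) ℂ := star U₁ * U₂ with hMdef
  set p : Fin n → ℝ := h₁.eigenvalues
  set q : Fin n → ℝ := h₂.eigenvalues
  have hm : M ∈ Matrix.unitaryGroup (Fin n) ℂ :=
    mul_mem (Unitary.star_mem h₁.eigenvectorUnitary.2) h₂.eigenvectorUnitary.2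
  have hMM : M * star M = 1 := (Matrix.mem_unitaryGroup_iff).mp hm
  have hMM' : star M * M = 1 := (Matrix.mem_unitaryGroup_iff').mp hm
  have hrow : ∀ i, ∑ j, Complex.normSq (M i j) = 1 := by
    intro i
    have h := congr_fun (congr_fun hMM i) i
    rw [Matrix.mul_apply, Matrix.one_apply_eq] at h
    have h2 : ∑ j, (Complex.normSq (M i j) : ℂ) = 1 := by
      rw [← h]
      exact Finset.sum_congr rfl fun j _ => (Complex.mul_conj (M i j)).symm
    exact_mod_cast h2
  have hcol : ∀ j, ∑ i, Complex.normSq (M i j) = 1 := by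
    intro j
    have h := congr_fun (congr_fun hMM' j) j
    rw [Matrix.mul_apply, Matrix.one_apply_eq] at h
    have h2 : ∑ i, (Complex.normSq (M i j) : ℂ) = 1 := by
      rw [← h]
      refine Finset.sum_congr rfl fun i _ => ?_
      rw [mul_comm]
      exact (Complex.mul_conj (M i j)).symm
    exact_mod_cast h2
  have hps : ∑ i, p i = 1 := sum_eigenvalues_eq_one ρ₁ h₁ ht₁
  have hqs : ∑ j, q j = 1 := sum_eigenvalues_eq_one ρ₂ h₂ ht₂
  rw [trace_mul_cfc_formula ρ₁ ρ₂ h₁ h₂, trace_mul_cfc_formula ρ₁ ρ₁ h₁ h₁,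
    Complex.ofReal_re, Complex.ofReal_re]
  have hU1 : star U₁ * U₁ = 1 := (Matrix.mem_unitaryGroup_iff').mp h₁.eigenvectorUnitary.2
  have hRHS : ∑ i, ∑ j, p i * Real.log (p j) *
      Complex.normSq ((star U₁ * U₁) i j) = ∑ i, p i * Real.log (p i) := by
    rw [hU1]
    refine Finset.sum_congr rfl fun i _ => ?_
    rw [Finset.sum_eq_single i]
    · simp
    · intro j _ hji
      simp [Matrix.one_apply, (Ne.symm hji)]
    · simp
  rw [hRHS]
  exact klein_real p q (fun i j => Complex.normSq (M i j))
    (fun i => hp₁.eigenvalues_pos i) (fun j => hp₂.eigenvalues_pos j)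
    (fun i j => Complex.normSq_nonneg _) hrow hcol hps hqs
end
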